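/- arXiv:2405.10580 — 3 statements merged into one kernel-verified Lean document; each statement's English description precedes it below -/
import Mathlib

section
/- Let M(N) → ∞ as N → ∞, let τ_c(N) = 1/(M(N)^{1/N} − 1), fix ξ ∈ ℝ, and set τ_N = τ_c(N)·(1 + ξ(1+τ_c(N))/N). Then p_{M}(τ_N) := 1 − (1 − (τ_N/(1+τ_N))^N)^{M(N)} converges to 1 − exp(−e^ξ) as N → ∞. -/
/-!
With `a = M ^ (1 / N)` the critical time `τc = 1 / (a - 1)` satisfies `τc / (1 + τc) = 1 / a`, and the
shift is chosen so that `τ / (1 + τ) = (1 + ξ / (N + ξ τc)) / a`. Hence `M p(τ) = (1 + ξ / (N + ξ τc)) ^ N`,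
which tends to `e ^ ξ` because `τc ≤ N / log M = o(N)`. Since `p(τ) → 0`, the Poisson limit
`1 - (1 - p) ^ M → 1 - exp (-e ^ ξ)` follows.
-/

open Filter Real Topology

theorem tendsto_one_add_rpow_exp_of_tendsto_mul {ι : Type*} {l : Filter ι} {x y : ι → ℝ} {c : ℝ}
    (hx : Tendsto x l (𝓝 0)) (hxy : Tendsto (fun i => y i * x i) l (𝓝 c)) :
    Tendsto (fun i => (1 + x i) ^ y i) l (𝓝 (exp c)) := by
  set g := dslope (fun t : ℝ => log (1 + t)) 0
  have hderiv : HasDerivAt (fun t : ℝ => log (1 + t)) 1 0 := by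
    simpa using ((hasDerivAt_id (0 : ℝ)).const_add 1).log (by norm_num)
  have hg : Tendsto (fun i => g (x i)) l (𝓝 1) := by
    have hcont : ContinuousAt g 0 := continuousAt_dslope_same.2 hderiv.differentiableAt
    simpa [g, dslope_same, hderiv.deriv, Function.comp_def] using hcont.tendsto.comp hx
  have hlog (t : ℝ) : log (1 + t) = t * g t := by
    simpa using (sub_smul_dslope (fun t : ℝ => log (1 + t)) 0 t).symm
  refine ((continuous_exp.tendsto c).comp (by simpa using hxy.mul hg)).congr' ?_
  filter_upwards [hx.eventually (lt_mem_nhds (show (-1 : ℝ) < 0 by norm_num))] with i hi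
  rw [Function.comp_apply, rpow_def_of_pos (by linarith), hlog, mul_comm (y i), mul_right_comm]

noncomputable def criticalTime (M : ℝ) (N : ℕ) : ℝ := 1 / (M ^ ((1 : ℝ) / N) - 1)

noncomputable def shiftedTime (M ξ : ℝ) (N : ℕ) : ℝ :=
  criticalTime M N * (1 + ξ * (1 + criticalTime M N) / N)

noncomputable def proofreadingProb (N : ℕ) (τ : ℝ) : ℝ := (τ / (1 + τ)) ^ N

theorem criticalTime_pos {M : ℝ} (hM : 1 < M) {N : ℕ} (hN : 0 < N) : 0 < criticalTime M N := by
  have : 1 < M ^ ((1 : ℝ) / N) := one_lt_rpow hM (by positivity)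
  exact one_div_pos.2 (by linarith)

theorem criticalTime_le {M : ℝ} (hM : 1 < M) {N : ℕ} (hN : 0 < N) :
    criticalTime M N ≤ N / log M := by
  have hx : 0 < log M / N := div_pos (log_pos hM) (by exact_mod_cast hN)
  have hexp : log M / N ≤ M ^ ((1 : ℝ) / N) - 1 := by
    rw [rpow_def_of_pos (by linarith), mul_one_div]
    linarith [add_one_le_exp (log M / N)]
  calc criticalTime M N ≤ 1 / (log M / N) := one_div_le_one_div_of_le hx hexp
    _ = N / log M := one_div_div _ _

theorem proofreadingProb_criticalTime {M : ℝ} (hM₀ : 0 < M) (hM₁ : M ≠ 1) {N : ℕ} (hN : N ≠ 0) :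
    proofreadingProb N (criticalTime M N) = M⁻¹ := by
  have hroot : (M ^ ((1 : ℝ) / N)) ^ N = M := by
    rw [one_div, rpow_inv_natCast_pow hM₀.le hN]
  have hne : M ^ ((1 : ℝ) / N) - 1 ≠ 0 := by
    intro h
    apply hM₁
    rw [← hroot, sub_eq_zero.1 h, one_pow]
  have hratio : criticalTime M N / (1 + criticalTime M N) = (M ^ ((1 : ℝ) / N))⁻¹ := by
    rw [criticalTime, one_add_div hne, sub_add_cancel, div_div_div_cancel_right₀ hne, one_div]
  rw [proofreadingProb, hratio, inv_pow, hroot]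

theorem div_one_add_shift {c ξ n : ℝ} (hc : 0 < c) (hn : n ≠ 0) (h : n + ξ * c ≠ 0) :
    c * (1 + ξ * (1 + c) / n) / (1 + c * (1 + ξ * (1 + c) / n))
      = c / (1 + c) * (1 + ξ / (n + ξ * c)) := by
  have hc₁ : 1 + c ≠ 0 := by positivity
  have hτ : 1 + c * (1 + ξ * (1 + c) / n) = (1 + c) * (n + ξ * c) / n := by
    field_simp
    ring
  rw [hτ, mul_comm ξ c] at *
  field_simp
  ring

theorem mul_proofreadingProb_shiftedTime {M : ℝ} (hM : 1 < M) (ξ : ℝ) {N : ℕ} (hN : 0 < N)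
    (h : N + ξ * criticalTime M N ≠ 0) :
    M * proofreadingProb N (shiftedTime M ξ N) = (1 + ξ / (N + ξ * criticalTime M N)) ^ N := by
  have hM₀ : 0 < M := zero_lt_one.trans hM
  have hratio := proofreadingProb_criticalTime hM₀ hM.ne' hN.ne'
  rw [proofreadingProb] at hratio
  rw [proofreadingProb, shiftedTime, div_one_add_shift (criticalTime_pos hM hN) (by positivity) h,
    mul_pow, hratio, mul_inv_cancel_left₀ hM₀.ne']

theorem tendsto_criticalTime_div_natCast {M : ℕ → ℝ} (hM : Tendsto M atTop atTop) :
    Tendsto (fun N => criticalTime (M N) N / N) atTop (𝓝 0) := by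
  have hlog : Tendsto (fun N => (log (M N))⁻¹) atTop (𝓝 0) :=
    (tendsto_log_atTop.comp hM).inv_tendsto_atTop
  refine tendsto_of_tendsto_of_tendsto_of_le_of_le' tendsto_const_nhds hlog ?_ ?_
  all_goals filter_upwards [hM.eventually_gt_atTop 1, eventually_gt_atTop 0] with N hMN hN
  · exact (div_pos (criticalTime_pos hMN hN) (by exact_mod_cast hN)).le
  · rw [div_le_iff₀ (by exact_mod_cast hN), inv_mul_eq_div]
    exact criticalTime_le hMN hN

theorem tendsto_mul_proofreadingProb_shiftedTime {M : ℕ → ℝ} (hM : Tendsto M atTop atTop)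
    (ξ : ℝ) :
    Tendsto (fun N => M N * proofreadingProb N (shiftedTime (M N) ξ N)) atTop (𝓝 (exp ξ)) := by
  set c : ℕ → ℝ := fun N => criticalTime (M N) N
  have hden : Tendsto (fun N : ℕ => 1 + ξ * (c N / N)) atTop (𝓝 1) := by
    simpa using ((tendsto_criticalTime_div_natCast hM).const_mul ξ).const_add 1
  have hNw : Tendsto (fun N : ℕ => N * (ξ / (N + ξ * c N))) atTop (𝓝 ξ) := by
    have := (tendsto_const_nhds (x := ξ)).div hden one_ne_zero
    rw [div_one] at this
    refine this.congr' ?_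
    filter_upwards [eventually_ne_atTop 0] with N hN
    simp only [Pi.div_apply]
    field_simp
  refine (tendsto_one_add_pow_exp_of_tendsto hNw).congr' ?_
  filter_upwards [hM.eventually_gt_atTop 1, eventually_gt_atTop 0,
    hden.eventually (lt_mem_nhds one_pos)] with N hMN hN hpos
  have hNc : (N : ℝ) + ξ * c N = N * (1 + ξ * (c N / N)) := by field_simp
  rw [mul_proofreadingProb_shiftedTime hMN ξ hN (by rw [hNc]; positivity)]

theorem stmt_7_general (M : ℕ → ℝ)
    (hMtop : Filter.Tendsto M Filter.atTop Filter.atTop) (ξ : ℝ) :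
    Filter.Tendsto
      (fun N : ℕ =>
        let τc : ℝ := 1 / ((M N) ^ ((1 : ℝ) / N) - 1)
        let τ : ℝ := τc * (1 + ξ * (1 + τc) / N)
        1 - (1 - (τ / (1 + τ)) ^ N) ^ (M N))
      Filter.atTop (nhds (1 - Real.exp (-Real.exp ξ))) := by
  set p : ℕ → ℝ := fun N => proofreadingProb N (shiftedTime (M N) ξ N)
  have hMp : Tendsto (fun N => M N * p N) atTop (𝓝 (exp ξ)) :=
    tendsto_mul_proofreadingProb_shiftedTime hMtop ξ
  have hp : Tendsto p atTop (𝓝 0) := by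
    refine (hMp.div_atTop hMtop).congr' ?_
    filter_upwards [hMtop.eventually_gt_atTop 0] with N hMN
    field_simp
  show Tendsto (fun N => 1 - (1 - p N) ^ M N) atTop _
  have := tendsto_one_add_rpow_exp_of_tendsto_mul (by simpa using hp.neg)
    (by simpa only [mul_neg] using hMp.neg)
  simpa [sub_eq_add_neg] using tendsto_const_nhds.sub this

theorem stmt_7 (M : ℕ → ℝ) (hM : ∀ N, 1 < M N)
    (hMtop : Filter.Tendsto M Filter.atTop Filter.atTop) (ξ : ℝ) :
    Filter.Tendsto
      (fun N : ℕ =>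
        let τc : ℝ := 1 / ((M N) ^ ((1 : ℝ) / N) - 1)
        let τ : ℝ := τc * (1 + ξ * (1 + τc) / N)
        1 - (1 - (τ / (1 + τ)) ^ N) ^ (M N))
      Filter.atTop (nhds (1 - Real.exp (-Real.exp ξ))) :=
  stmt_7_general M hMtop ξ
end

section
/- Let M > 1 be constant, τ_c(N) = 1/(M^{1/N} − 1), and fix ξ > 0. Then p_M(ξ·τ_c(N)) = 1 − (1 − (ξτ_c(N)/(1+ξτ_c(N)))^N)^M converges to 1 − (1 − e^{−log(M)/ξ})^M as N → ∞. -/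
/-!
Write `a_N = M ^ (1/N) - 1 > 0`. Since `ξ τ_c / (1 + ξ τ_c) = (1 + a_N / ξ)⁻¹`, we have
`p(ξ τ_c) = exp (-N log (1 + a_N / ξ))`. The exponent `N log (1 + a_N / ξ)` is
the difference quotient at `0`, with step `1/N`, of `t ↦ log (1 + (M ^ t - 1) / ξ)`, whose
derivative at `0` is `log M / ξ`. Continuity of `x ↦ 1 - (1 - x) ^ M` finishes the proof.
-/

open Real Filter Topology

theorem HasDerivAt.tendsto_nat_smul_one_div {E : Type*} [NormedAddCommGroup E] [NormedSpace ℝ E]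
    {f : ℝ → E} {f' : E} (hf : HasDerivAt f f' 0) (hf0 : f 0 = 0) :
    Tendsto (fun n : ℕ => (n : ℝ) • f (1 / n)) atTop (𝓝 f') := by
  have h_one_div : Tendsto (fun n : ℕ => (1 : ℝ) / n) atTop (𝓝[≠] 0) :=
    tendsto_nhdsWithin_iff.2 ⟨tendsto_one_div_atTop_nhds_zero_nat,
      (eventually_ne_atTop 0).mono fun n hn => by simpa using hn⟩
  refine ((hasDerivAt_iff_tendsto_slope.1 hf).comp h_one_div).congr fun n => ?_
  simp [slope_def_module, hf0]

theorem hasDerivAt_log_one_add_rpow_sub_one_div {M : ℝ} (hM : 0 < M) (ξ : ℝ) :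
    HasDerivAt (fun t : ℝ => log (1 + (M ^ t - 1) / ξ)) (log M / ξ) 0 := by
  have h_rpow := (hasStrictDerivAt_const_rpow hM 0).hasDerivAt
  simpa using (((h_rpow.sub_const 1).div_const ξ).const_add 1).log (by simp)

theorem div_one_add_pow_eq_exp_neg_mul_log {a ξ : ℝ} (ha : 0 < a) (hξ : 0 < ξ) (N : ℕ) :
    (ξ * (1 / a) / (1 + ξ * (1 / a))) ^ N = exp (-(N * log (1 + a / ξ))) := by
  have h_base : ξ * (1 / a) / (1 + ξ * (1 / a)) = (1 + a / ξ)⁻¹ := by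
    field_simp
    ring
  rw [h_base, exp_neg, exp_nat_mul, exp_log (by positivity), inv_pow]

theorem stmt_8 (M : ℝ) (hM : 1 < M) (ξ : ℝ) (hξ : 0 < ξ) :
    Filter.Tendsto
      (fun N : ℕ =>
        let τc : ℝ := 1 / (M ^ ((1 : ℝ) / N) - 1)
        1 - (1 - (ξ * τc / (1 + ξ * τc)) ^ N) ^ M)
      Filter.atTop
      (nhds (1 - (1 - Real.exp (-Real.log M / ξ)) ^ M)) := by
  have hM0 : 0 < M := by linarith
  have h_exponent :=
    (hasDerivAt_log_one_add_rpow_sub_one_div hM0 ξ).tendsto_nat_smul_one_div (by simp)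
  have h_outer : Continuous fun x : ℝ => 1 - (1 - x) ^ M :=
    continuous_const.sub <|
      (continuous_rpow_const hM0.le).comp (continuous_const.sub continuous_id)
  rw [neg_div]
  refine ((h_outer.tendsto _).comp ((continuous_exp.tendsto _).comp h_exponent.neg)).congr' ?_
  filter_upwards [eventually_ne_atTop 0] with N hN
  have ha : 0 < M ^ ((1 : ℝ) / N) - 1 := sub_pos.2 (one_lt_rpow hM (by positivity))
  simp only [Function.comp_apply, smul_eq_mul, div_one_add_pow_eq_exp_neg_mul_log ha hξ]
end

section
/- Suppose M(N) → ∞ and log(M(N))/N → b > 0 as N → ∞, and τ_N = τ_c(N)(1 + ξ(1+τ_c(N))/N) with τ_c(N) = 1/(M(N)^{1/N} − 1) and ξ ∈ ℝ fixed. Then M(N)·(τ_N/(1+τ_N))^N → e^ξ as N → ∞, and consequently the binomial random variable X_M counting responses in M(N) independent trials with success probability (τ_N/(1+τ_N))^N converges in distribution to a Poisson random variable with parameter e^ξ. -/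
/-!
Put `a = M ^ (1 / N)`, so that `τ_c = 1 / (a - 1)` and `M = (1 + τ_c⁻¹) ^ N`. A direct computation
turns `M (τ / (1 + τ)) ^ N` into `(1 + ξ / (N + ξ τ_c)) ^ N`. Since `a ≥ 1 + log M / N`, we have
`τ_c / N ≤ 1 / log M → 0`, hence `N ξ / (N + ξ τ_c) → ξ` and the power tends to `exp ξ`.
The binomial probabilities then converge by the Poisson limit theorem, which holds for any number
of trials `M → ∞` with `M p → λ`.
-/

open Filter Topology Real

section PoissonLimit

variable {ι : Type*} {l : Filter ι}

theorem tendsto_zero_of_tendsto_mul_of_tendsto_atTop {f u : ι → ℝ} {c : ℝ}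
    (hf : Tendsto f l atTop) (hfu : Tendsto (fun i => f i * u i) l (𝓝 c)) :
    Tendsto u l (𝓝 0) :=
  tendsto_zero_of_isBoundedUnder_smul_of_tendsto_cobounded hfu.norm.isBoundedUnder_le
    (hf.mono_right IsOrderBornology.atTop_le_cobounded)

theorem tendsto_one_add_pow_exp_of_tendsto_mul {f : ι → ℕ} {u : ι → ℝ} {c : ℝ}
    (hf : Tendsto f l atTop) (hfu : Tendsto (fun i => f i * u i) l (𝓝 c)) :
    Tendsto (fun i => (1 + u i) ^ f i) l (𝓝 (exp c)) := by
  have hu : Tendsto u l (𝓝 0) :=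
    tendsto_zero_of_tendsto_mul_of_tendsto_atTop (tendsto_natCast_atTop_iff.mpr hf) hfu
  set g : ℝ → ℝ := fun y => log (1 + y)
  -- `dslope g 0` is the continuous extension of `log (1 + y) / y`, with value `g' 0 = 1` at `0`.
  have hg : HasDerivAt g 1 0 := by
    simpa using ((hasDerivAt_id (0 : ℝ)).const_add 1).log (by norm_num)
  have hslope : Tendsto (fun i => dslope g 0 (u i)) l (𝓝 1) := by
    have := (continuousAt_dslope_same.mpr hg.differentiableAt).tendsto.comp hu
    rwa [dslope_same, hg.deriv] at this
  have hlog : Tendsto (fun i => f i * log (1 + u i)) l (𝓝 c) := by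
    have hmul := hfu.mul hslope
    rw [mul_one] at hmul
    refine hmul.congr fun i => ?_
    have := sub_smul_dslope g 0 (u i)
    simp only [g, sub_zero, smul_eq_mul, add_zero, log_one] at this
    rw [← this, mul_assoc]
  refine ((continuous_exp.tendsto c).comp hlog).congr' ?_
  filter_upwards [hu.eventually (lt_mem_nhds (by norm_num : (-1 : ℝ) < 0))] with i hi
  rw [Function.comp_apply, exp_nat_mul, exp_log (by linarith)]

open Asymptotics in
theorem tendsto_choose_mul_pow_of_tendsto_mul {M : ι → ℕ} {p : ι → ℝ} {r : ℝ} (k : ℕ)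
    (hM : Tendsto M l atTop) (hr : Tendsto (fun i => M i * p i) l (𝓝 r)) :
    Tendsto (fun i => (M i).choose k * p i ^ k) l (𝓝 (r ^ k / k.factorial)) := by
  have hequiv : (fun i => ((M i).choose k : ℝ) * p i ^ k) ~[l]
      fun i => (M i * p i) ^ k / k.factorial :=
    calc _ ~[l] fun i => ((M i : ℝ) ^ k / k.factorial) * p i ^ k :=
          ((isEquivalent_choose k).comp_tendsto hM).mul IsEquivalent.refl
      _ = fun i => (M i * p i) ^ k / k.factorial := by ext; ring
  exact hequiv.tendsto_nhds_iff.mpr ((hr.pow k).div_const _)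

theorem tendsto_choose_mul_pow_mul_one_sub_pow {M : ι → ℕ} {p : ι → ℝ} {r : ℝ} (k : ℕ)
    (hM : Tendsto M l atTop) (hr : Tendsto (fun i => M i * p i) l (𝓝 r)) :
    Tendsto (fun i => (M i).choose k * p i ^ k * (1 - p i) ^ (M i - k)) l
      (𝓝 (exp (-r) * r ^ k / k.factorial)) := by
  have hp : Tendsto p l (𝓝 0) :=
    tendsto_zero_of_tendsto_mul_of_tendsto_atTop (tendsto_natCast_atTop_iff.mpr hM) hr
  have hpow : Tendsto (fun i => (1 - p i) ^ M i) l (𝓝 (exp (-r))) :=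
    tendsto_one_add_pow_exp_of_tendsto_mul hM (by simpa [sub_eq_add_neg] using hr.neg)
  have hpowk : Tendsto (fun i => ((1 - p i) ^ k)⁻¹) l (𝓝 1) := by
    simpa using ((tendsto_const_nhds.sub hp).pow k).inv₀ (by simp : ((1 : ℝ) - 0) ^ k ≠ 0)
  have hsplit : (fun i => (1 - p i) ^ M i * ((1 - p i) ^ k)⁻¹) =ᶠ[l]
      fun i => (1 - p i) ^ (M i - k) := by
    filter_upwards [hM.eventually_ge_atTop k, hp.eventually (gt_mem_nhds one_pos)]
      with i hk hp1
    rw [pow_sub₀ _ (sub_ne_zero.mpr hp1.ne') hk]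
  have := (tendsto_choose_mul_pow_of_tendsto_mul k hM hr).mul
    ((hpow.mul hpowk).congr' hsplit)
  rwa [mul_one, div_mul_eq_mul_div, mul_comm (r ^ k)] at this

end PoissonLimit

noncomputable def criticalTau (m : ℝ) (N : ℕ) : ℝ := 1 / (m ^ ((1 : ℝ) / N) - 1)

section CriticalTau

variable {m : ℝ} {N : ℕ}

theorem inv_criticalTau (m : ℝ) (N : ℕ) : (criticalTau m N)⁻¹ = m ^ ((1 : ℝ) / N) - 1 := by
  rw [criticalTau, one_div, inv_inv]

theorem criticalTau_pos (hm : 1 < m) (hN : N ≠ 0) : 0 < criticalTau m N := by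
  rw [← inv_pos, inv_criticalTau, sub_pos]
  exact one_lt_rpow hm (by positivity)

theorem one_add_inv_criticalTau_pow (hm : 0 ≤ m) (hN : N ≠ 0) :
    (1 + (criticalTau m N)⁻¹) ^ N = m := by
  rw [inv_criticalTau, add_sub_cancel, ← rpow_natCast, ← rpow_mul hm,
    one_div_mul_cancel (Nat.cast_ne_zero.mpr hN), rpow_one]

theorem log_le_nat_mul_inv_criticalTau (hm : 0 < m) (hN : N ≠ 0) :
    log m ≤ N * (criticalTau m N)⁻¹ := by
  calc log m = N * (log m * (1 / N)) := by field_simp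
    _ ≤ N * (criticalTau m N)⁻¹ := by
      rw [inv_criticalTau, rpow_def_of_pos hm]
      gcongr
      linarith [add_one_le_exp (log m * (1 / N))]

theorem tendsto_criticalTau_div {m : ℕ → ℝ} (hm : Tendsto m atTop atTop) :
    Tendsto (fun N => criticalTau (m N) N / N) atTop (𝓝 0) := by
  refine tendsto_of_tendsto_of_tendsto_of_le_of_le' tendsto_const_nhds
    (tendsto_log_atTop.comp hm).inv_tendsto_atTop ?_ ?_
  · filter_upwards [hm.eventually_gt_atTop 1, eventually_ne_atTop 0] with N hm1 hN
    exact div_nonneg (criticalTau_pos hm1 hN).le N.cast_nonneg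
  · filter_upwards [hm.eventually_gt_atTop 1, eventually_ne_atTop 0] with N hm1 hN
    have hlog : 0 < log (m N) := log_pos hm1
    calc criticalTau (m N) N / N = (N * (criticalTau (m N) N)⁻¹)⁻¹ := by
          rw [mul_inv, inv_inv, div_eq_inv_mul]
      _ ≤ (log (m N))⁻¹ := inv_anti₀ hlog
          (log_le_nat_mul_inv_criticalTau (by linarith) hN)

end CriticalTau

theorem one_add_inv_mul_div_one_add {c ξ n t : ℝ} (hc : 0 < c) (hn : n ≠ 0)
    (hnξ : n + ξ * c ≠ 0) (ht : t = c * (1 + ξ * (1 + c) / n)) :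
    (1 + c⁻¹) * (t / (1 + t)) = 1 + ξ / (n + ξ * c) := by
  have h1t : 1 + t = (1 + c) * (n + ξ * c) / n := by rw [ht]; field_simp; ring
  have hc1 : 1 + c ≠ 0 := by positivity
  rw [h1t, ht, one_add_div hnξ]
  field_simp
  ring

theorem tendsto_mul_div_one_add_pow {m : ℕ → ℝ} (hm : Tendsto m atTop atTop) (ξ : ℝ)
    {τ : ℕ → ℝ} (hτ : ∀ N, τ N = criticalTau (m N) N * (1 + ξ * (1 + criticalTau (m N) N) / N)) :
    Tendsto (fun N => m N * (τ N / (1 + τ N)) ^ N) atTop (𝓝 (exp ξ)) := by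
  set c := fun N => criticalTau (m N) N
  have hc : Tendsto (fun N => ξ * (c N / N)) atTop (𝓝 0) := by
    simpa using (tendsto_criticalTau_div hm).const_mul ξ
  have hdiv : ∀ᶠ N : ℕ in atTop, (N : ℝ) + ξ * c N = N * (1 + ξ * (c N / N)) := by
    filter_upwards [eventually_ne_atTop 0] with N hN
    field_simp
  have hden : ∀ᶠ N : ℕ in atTop, (N : ℝ) + ξ * c N ≠ 0 := by
    filter_upwards [hdiv, eventually_ne_atTop 0, hc.eventually (lt_mem_nhds neg_one_lt_zero)]
      with N hNc hN hlt
    rw [hNc]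
    exact mul_ne_zero (Nat.cast_ne_zero.mpr hN) (by linarith)
  have hlin : Tendsto (fun N : ℕ => N * (ξ / (N + ξ * c N))) atTop (𝓝 ξ) := by
    have : Tendsto (fun N : ℕ => ξ / (1 + ξ * (c N / N))) atTop (𝓝 (ξ / (1 + 0))) :=
      tendsto_const_nhds.div (tendsto_const_nhds.add hc) (by norm_num)
    rw [add_zero, div_one] at this
    refine this.congr' ?_
    filter_upwards [hdiv, eventually_ne_atTop 0] with N hNc hN
    rw [hNc]
    field_simp
  refine (tendsto_one_add_pow_exp_of_tendsto hlin).congr' ?_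
  filter_upwards [hm.eventually_gt_atTop 1, eventually_ne_atTop 0, hden] with N hm1 hN hNξ
  rw [← one_add_inv_criticalTau_pow (m := m N) (by linarith) hN, ← mul_pow,
    one_add_inv_mul_div_one_add (criticalTau_pos hm1 hN) (Nat.cast_ne_zero.mpr hN) hNξ (hτ N)]

theorem stmt_16_general (M : ℕ → ℕ)
    (hMtop : Filter.Tendsto (fun N : ℕ => (M N : ℝ)) Filter.atTop Filter.atTop)
    (ξ : ℝ)
    (τ : ℕ → ℝ)
    (hτ : ∀ N : ℕ, τ N =
      (1 / ((M N : ℝ) ^ ((1 : ℝ) / N) - 1)) *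
        (1 + ξ * (1 + 1 / ((M N : ℝ) ^ ((1 : ℝ) / N) - 1)) / N)) :
    Filter.Tendsto (fun N : ℕ => (M N : ℝ) * (τ N / (1 + τ N)) ^ N)
      Filter.atTop (nhds (Real.exp ξ)) ∧
    ∀ k : ℕ,
      Filter.Tendsto
        (fun N : ℕ => (Nat.choose (M N) k : ℝ) * ((τ N / (1 + τ N)) ^ N) ^ k *
          (1 - (τ N / (1 + τ N)) ^ N) ^ (M N - k))
        Filter.atTop
        (nhds (Real.exp (-Real.exp ξ) * (Real.exp ξ) ^ k / (Nat.factorial k : ℝ))) := by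
  have hmean := tendsto_mul_div_one_add_pow hMtop ξ hτ
  exact ⟨hmean, fun k =>
    tendsto_choose_mul_pow_mul_one_sub_pow k (tendsto_natCast_atTop_iff.mp hMtop) hmean⟩

theorem stmt_16 (M : ℕ → ℕ) (hM : ∀ N, 1 < M N)
    (hMtop : Filter.Tendsto (fun N : ℕ => (M N : ℝ)) Filter.atTop Filter.atTop)
    (b : ℝ) (hb : 0 < b)
    (hlog : Filter.Tendsto (fun N : ℕ => Real.log (M N) / N) Filter.atTop (nhds b))
    (ξ : ℝ)
    (τ : ℕ → ℝ)
    (hτ : ∀ N : ℕ, τ N =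
      (1 / ((M N : ℝ) ^ ((1 : ℝ) / N) - 1)) *
        (1 + ξ * (1 + 1 / ((M N : ℝ) ^ ((1 : ℝ) / N) - 1)) / N)) :
    Filter.Tendsto (fun N : ℕ => (M N : ℝ) * (τ N / (1 + τ N)) ^ N)
      Filter.atTop (nhds (Real.exp ξ)) ∧
    ∀ k : ℕ,
      Filter.Tendsto
        (fun N : ℕ => (Nat.choose (M N) k : ℝ) * ((τ N / (1 + τ N)) ^ N) ^ k *
          (1 - (τ N / (1 + τ N)) ^ N) ^ (M N - k))
        Filter.atTop
        (nhds (Real.exp (-Real.exp ξ) * (Real.exp ξ) ^ k / (Nat.factorial k : ℝ))) :=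
  stmt_16_general M hMtop ξ τ hτ
end
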